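/- arXiv:2212.09112 — 2 statements merged into one kernel-verified Lean document; each statement's English description precedes it below -/
import Mathlib

section
/- Dual integral lemma, case n = 1: for real θ with 0 < θ < 1/2 and distinct u₁, u₂ ∈ ℂ, ∫_ℂ |z - u₁|^{2θ-2}|z - u₂|^{2θ-2} d²z = π · (Γ^ℂ(θ)²/Γ^ℂ(2θ)) · |u₁ - u₂|^{2(2θ-1)}, where Γ^ℂ(θ) = Γ(θ)/Γ(1-θ). -/
/-!
Schwinger parametrization, `Γ(α) x^(-α) = ∫₀^∞ t^(α-1) e^(-t x) dt` for `x > 0`, applied with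
`x = ‖z - u₁‖²` and `x = ‖z - u₂‖²`, turns the integrand into a double integral of Gaussians in `z`.
Integrating in `z` first (Tonelli) and completing the square leaves an integral over the parameters
`t, s`, which the substitution `s = tσ` splits into a Gamma integral in `t` and a Beta integral
in `σ`.
-/

open Real MeasureTheory Set Filter Module

/-- The Gamma function of the complex field at a real point: `Γ^ℂ(c) = Γ(c)/Γ(1-c)`. -/
noncomputable def GammaCR (c : ℝ) : ℝ := Real.Gamma c / Real.Gamma (1 - c)

lemma lintegral_ofReal_const_mul {α : Type*} [MeasurableSpace α] {μ : Measure α} {c : ℝ}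
    (hc : 0 ≤ c) (f : α → ℝ) :
    ∫⁻ x, ENNReal.ofReal (c * f x) ∂μ = ENNReal.ofReal c * ∫⁻ x, ENNReal.ofReal (f x) ∂μ := by
  simp_rw [ENNReal.ofReal_mul hc]
  exact lintegral_const_mul' _ _ ENNReal.ofReal_ne_top

lemma ofReal_integral_eq_lintegral_ofReal_of_integral_pos {α : Type*} [MeasurableSpace α]
    {μ : Measure α} {f : α → ℝ} (hf : 0 ≤ᵐ[μ] f) (h : 0 < ∫ x, f x ∂μ) :
    ENNReal.ofReal (∫ x, f x ∂μ) = ∫⁻ x, ENNReal.ofReal (f x) ∂μ :=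
  ofReal_integral_eq_lintegral_ofReal (Integrable.of_integral_ne_zero h.ne') hf

lemma lintegral_lintegral_lintegral_swap {α β γ : Type*} [MeasurableSpace α] [MeasurableSpace β]
    [MeasurableSpace γ] {μ : Measure α} {ν : Measure β} {ρ : Measure γ} [SFinite μ] [SFinite ν]
    [SFinite ρ] {f : α → β → γ → ENNReal}
    (hf : Measurable fun p : α × β × γ => f p.1 p.2.1 p.2.2) :
    ∫⁻ x, ∫⁻ y, ∫⁻ z, f x y z ∂ρ ∂ν ∂μ = ∫⁻ y, ∫⁻ z, ∫⁻ x, f x y z ∂μ ∂ρ ∂ν := by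
  have hyz : Measurable fun p : α × β => ∫⁻ z, f p.1 p.2 z ∂ρ :=
    hf.comp (measurable_fst.fst.prodMk (measurable_fst.snd.prodMk measurable_snd))
      |>.lintegral_prod_right'
  rw [lintegral_lintegral_swap hyz.aemeasurable]
  refine lintegral_congr fun y => lintegral_lintegral_swap ?_
  exact (hf.comp (measurable_fst.prodMk (measurable_const.prodMk measurable_snd))).aemeasurable

lemma lintegral_Ioi_comp_mul_left {c : ℝ} (hc : 0 < c) (g : ℝ → ENNReal) :
    ∫⁻ x in Ioi 0, g x = ENNReal.ofReal c * ∫⁻ x in Ioi 0, g (c * x) := by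
  have h := lintegral_image_eq_lintegral_abs_deriv_mul (measurableSet_Ioi (a := 0))
    (fun x _ => ((hasDerivAt_id x).const_mul c).hasDerivWithinAt)
    (mul_right_injective₀ hc.ne').injOn g
  simp only [id, mul_one, abs_of_pos hc, image_mul_left_Ioi hc, mul_zero] at h
  rw [h, lintegral_const_mul' _ _ ENNReal.ofReal_ne_top]

lemma lintegral_rpow_mul_exp_neg_mul_Ioi {a r : ℝ} (ha : 0 < a) (hr : 0 < r) :
    ∫⁻ t in Ioi 0, ENNReal.ofReal (t ^ (a - 1) * exp (-(r * t)))
      = ENNReal.ofReal (Gamma a * r ^ (-a)) := by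
  have h := integral_rpow_mul_exp_neg_mul_Ioi ha hr
  rw [one_div, inv_rpow hr.le, ← rpow_neg hr.le, mul_comm] at h
  rw [← h, ofReal_integral_eq_lintegral_ofReal_of_integral_pos]
  · filter_upwards [ae_restrict_mem measurableSet_Ioi] with t (ht : 0 < t)
    positivity
  · rw [h]
    exact mul_pos (Gamma_pos_of_pos ha) (rpow_pos_of_pos hr _)

lemma lintegral_Ioi_lintegral_Ioi_rpow_mul_rpow_mul_exp_neg {α β x y : ℝ} (hα : 0 < α)
    (hβ : 0 < β) (hx : 0 < x) (hy : 0 < y) :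
    ∫⁻ t in Ioi 0, ∫⁻ s in Ioi 0,
        ENNReal.ofReal (t ^ (α - 1) * s ^ (β - 1) * exp (-(t * x + s * y)))
      = ENNReal.ofReal (Gamma α * x ^ (-α) * (Gamma β * y ^ (-β))) := by
  have hsplit : ∀ t s : ℝ, t ^ (α - 1) * s ^ (β - 1) * exp (-(t * x + s * y))
      = t ^ (α - 1) * exp (-(x * t)) * (s ^ (β - 1) * exp (-(y * s))) := fun t s => by
    rw [neg_add, exp_add]
    ring_nf
  simp_rw [hsplit]
  rw [setLIntegral_congr_fun measurableSet_Ioi fun t (ht : 0 < t) =>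
      lintegral_ofReal_const_mul (by positivity) _,
    lintegral_rpow_mul_exp_neg_mul_Ioi hβ hy, lintegral_mul_const' _ _ ENNReal.ofReal_ne_top,
    lintegral_rpow_mul_exp_neg_mul_Ioi hα hx, ← ENNReal.ofReal_mul (by positivity)]

lemma lintegral_rpow_mul_one_add_rpow_neg_Ioi {a b : ℝ} (ha : 0 < a) (hb : 0 < b) :
    ∫⁻ x in Ioi 0, ENNReal.ofReal (x ^ (a - 1) * (1 + x) ^ (-(a + b)))
      = ENNReal.ofReal (Gamma a * Gamma b / Gamma (a + b)) := by
  have hab : 0 < a + b := add_pos ha hb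
  have hΓab : 0 < Gamma (a + b) := Gamma_pos_of_pos hab
  refine (ENNReal.mul_right_strictMono (ENNReal.ofReal_pos.mpr hΓab).ne'
    ENNReal.ofReal_ne_top).injective ?_
  calc ENNReal.ofReal (Gamma (a + b))
        * ∫⁻ x in Ioi 0, ENNReal.ofReal (x ^ (a - 1) * (1 + x) ^ (-(a + b)))
      = ∫⁻ x in Ioi 0, ∫⁻ t in Ioi 0,
          ENNReal.ofReal (x ^ (a - 1) * (t ^ (a + b - 1) * exp (-((1 + x) * t)))) := by
        rw [← lintegral_const_mul' _ _ ENNReal.ofReal_ne_top]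
        refine setLIntegral_congr_fun measurableSet_Ioi fun x (hx : 0 < x) => ?_
        rw [lintegral_ofReal_const_mul (rpow_nonneg hx.le _),
          lintegral_rpow_mul_exp_neg_mul_Ioi hab (by linarith), ← ENNReal.ofReal_mul hΓab.le,
          ← ENNReal.ofReal_mul (rpow_nonneg hx.le _)]
        ring_nf
    _ = ∫⁻ t in Ioi 0, ∫⁻ x in Ioi 0,
          ENNReal.ofReal (x ^ (a - 1) * (t ^ (a + b - 1) * exp (-((1 + x) * t)))) :=
        lintegral_lintegral_swap (by fun_prop)
    _ = ∫⁻ t in Ioi 0, ENNReal.ofReal (Gamma a * (t ^ (b - 1) * exp (-(1 * t)))) := by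
        refine setLIntegral_congr_fun measurableSet_Ioi fun t (ht : 0 < t) => ?_
        have hsplit : ∀ x, x ^ (a - 1) * (t ^ (a + b - 1) * exp (-((1 + x) * t)))
            = t ^ (a + b - 1) * exp (-t) * (x ^ (a - 1) * exp (-(t * x))) := fun x => by
          rw [show -((1 + x) * t) = -t + -(t * x) by ring, exp_add]
          ring
        simp_rw [hsplit]
        rw [lintegral_ofReal_const_mul (by positivity), lintegral_rpow_mul_exp_neg_mul_Ioi ha ht,
          ← ENNReal.ofReal_mul (by positivity), one_mul,
          show b - 1 = (a + b - 1) + -a by ring, rpow_add ht]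
        ring_nf
    _ = ENNReal.ofReal (Gamma (a + b)) * ENNReal.ofReal (Gamma a * Gamma b / Gamma (a + b)) := by
        rw [lintegral_ofReal_const_mul (Gamma_pos_of_pos ha).le,
          lintegral_rpow_mul_exp_neg_mul_Ioi hb one_pos, one_rpow, mul_one,
          ← ENNReal.ofReal_mul (Gamma_pos_of_pos ha).le, ← ENNReal.ofReal_mul hΓab.le,
          mul_div_cancel₀ _ hΓab.ne']

section SchwingerParameters

variable {α β γ D : ℝ}

lemma lintegral_Ioi_rpow_mul_exp_parallel_comp_mul_left {t : ℝ} (ht : 0 < t) :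
    ∫⁻ s in Ioi 0, ENNReal.ofReal
        (t ^ (α - 1) * s ^ (β - 1) * (t + s) ^ (-γ) * exp (-(t * s / (t + s) * D)))
      = ∫⁻ σ in Ioi 0, ENNReal.ofReal (σ ^ (β - 1) * (1 + σ) ^ (-γ)
          * (t ^ (α + β - γ - 1) * exp (-(σ * D / (1 + σ) * t)))) := by
  rw [lintegral_Ioi_comp_mul_left ht, ← lintegral_const_mul' _ _ ENNReal.ofReal_ne_top]
  refine setLIntegral_congr_fun measurableSet_Ioi fun σ (hσ : 0 < σ) => ?_
  rw [← ENNReal.ofReal_mul ht.le, show t + t * σ = t * (1 + σ) by ring,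
    mul_rpow ht.le hσ.le, mul_rpow ht.le (by positivity),
    show α + β - γ - 1 = 1 + (α - 1) + (β - 1) + -γ by ring, rpow_add ht, rpow_add ht,
    rpow_add ht, rpow_one,
    show t * (t * σ) / (t * (1 + σ)) * D = σ * D / (1 + σ) * t by field_simp]
  ring_nf

/-- `t * s / (t + s)` is the parallel sum of `t` and `s`. -/
lemma lintegral_Ioi_lintegral_Ioi_rpow_mul_exp_parallel (hD : 0 < D) (hα : α < γ)
    (hβ : β < γ) (hγ : γ < α + β) :
    ∫⁻ t in Ioi 0, ∫⁻ s in Ioi 0, ENNReal.ofReal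
        (t ^ (α - 1) * s ^ (β - 1) * (t + s) ^ (-γ) * exp (-(t * s / (t + s) * D)))
      = ENNReal.ofReal (Gamma (α + β - γ) * Gamma (γ - α) * Gamma (γ - β)
          / Gamma (2 * γ - α - β) * D ^ (γ - α - β)) := by
  have hδ : 0 < α + β - γ := by linarith
  calc _ = ∫⁻ t in Ioi 0, ∫⁻ σ in Ioi 0, ENNReal.ofReal (σ ^ (β - 1) * (1 + σ) ^ (-γ)
          * (t ^ (α + β - γ - 1) * exp (-(σ * D / (1 + σ) * t)))) :=
        setLIntegral_congr_fun measurableSet_Ioi fun t ht =>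
          lintegral_Ioi_rpow_mul_exp_parallel_comp_mul_left ht
    _ = ∫⁻ σ in Ioi 0, ∫⁻ t in Ioi 0, ENNReal.ofReal (σ ^ (β - 1) * (1 + σ) ^ (-γ)
          * (t ^ (α + β - γ - 1) * exp (-(σ * D / (1 + σ) * t)))) :=
        lintegral_lintegral_swap (by fun_prop)
    _ = ∫⁻ σ in Ioi 0, ENNReal.ofReal (Gamma (α + β - γ) * D ^ (γ - α - β)
          * (σ ^ ((γ - α) - 1) * (1 + σ) ^ (-((γ - α) + (γ - β))))) := by
        refine setLIntegral_congr_fun measurableSet_Ioi fun σ (hσ : 0 < σ) => ?_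
        have h1σ : 0 < 1 + σ := by linarith
        rw [lintegral_ofReal_const_mul (by positivity),
          lintegral_rpow_mul_exp_neg_mul_Ioi hδ (by positivity),
          ← ENNReal.ofReal_mul (by positivity)]
        congr 1
        rw [div_rpow (by positivity) h1σ.le, mul_rpow hσ.le hD.le,
          show γ - α - 1 = (β - 1) + -(α + β - γ) by ring, rpow_add hσ,
          show -((γ - α) + (γ - β)) = -γ + -(-(α + β - γ)) by ring, rpow_add h1σ,
          rpow_neg h1σ.le (-(α + β - γ)), show γ - α - β = -(α + β - γ) by ring]
        field_simp
    _ = _ := by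
        rw [lintegral_ofReal_const_mul (by positivity),
          lintegral_rpow_mul_one_add_rpow_neg_Ioi (by linarith) (by linarith),
          ← ENNReal.ofReal_mul (by positivity), show γ - α + (γ - β) = 2 * γ - α - β by ring]
        ring_nf

end SchwingerParameters

section InnerProductSpace

variable {V : Type*} [NormedAddCommGroup V] [InnerProductSpace ℝ V]

lemma mul_norm_sub_sq_add_mul_norm_sub_sq {t s : ℝ} (hts : t + s ≠ 0) (z u₁ u₂ : V) :
    t * ‖z - u₁‖ ^ 2 + s * ‖z - u₂‖ ^ 2
      = (t + s) * ‖z - (t + s)⁻¹ • (t • u₁ + s • u₂)‖ ^ 2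
        + t * s / (t + s) * ‖u₁ - u₂‖ ^ 2 := by
  simp only [norm_sub_sq_real, norm_add_sq_real, norm_smul, inner_add_right, inner_smul_right,
    real_inner_smul_left, mul_pow, Real.norm_eq_abs, sq_abs]
  field_simp
  ring

variable [FiniteDimensional ℝ V] [MeasurableSpace V] [BorelSpace V]

lemma integral_exp_neg_mul_norm_sub_sq_add_mul_norm_sub_sq {t s : ℝ} (ht : 0 < t) (hs : 0 < s)
    (u₁ u₂ : V) :
    ∫ z, exp (-(t * ‖z - u₁‖ ^ 2 + s * ‖z - u₂‖ ^ 2))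
      = (π / (t + s)) ^ (finrank ℝ V / 2 : ℝ) * exp (-(t * s / (t + s) * ‖u₁ - u₂‖ ^ 2)) := by
  have hts : 0 < t + s := add_pos ht hs
  simp_rw [mul_norm_sub_sq_add_mul_norm_sub_sq hts.ne', neg_add, exp_add]
  rw [integral_mul_const, integral_sub_right_eq_self (fun z => exp (-((t + s) * ‖z‖ ^ 2))),
    ← GaussianFourier.integral_rexp_neg_mul_sq_norm hts]
  simp_rw [neg_mul]

lemma lintegral_exp_neg_mul_norm_sub_sq_add_mul_norm_sub_sq {t s : ℝ} (ht : 0 < t) (hs : 0 < s)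
    (u₁ u₂ : V) :
    ∫⁻ z, ENNReal.ofReal (exp (-(t * ‖z - u₁‖ ^ 2 + s * ‖z - u₂‖ ^ 2)))
      = ENNReal.ofReal ((π / (t + s)) ^ (finrank ℝ V / 2 : ℝ)
          * exp (-(t * s / (t + s) * ‖u₁ - u₂‖ ^ 2))) := by
  rw [← integral_exp_neg_mul_norm_sub_sq_add_mul_norm_sub_sq ht hs,
    ofReal_integral_eq_lintegral_ofReal_of_integral_pos (ae_of_all _ fun _ => (exp_pos _).le)]
  rw [integral_exp_neg_mul_norm_sub_sq_add_mul_norm_sub_sq ht hs]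
  positivity

theorem lintegral_norm_sub_rpow_mul_norm_sub_rpow {α β : ℝ} (hα : 0 < α) (hβ : 0 < β)
    (hαV : α < finrank ℝ V / 2) (hβV : β < finrank ℝ V / 2) (hαβ : finrank ℝ V / 2 < α + β)
    {u₁ u₂ : V} (hu : u₁ ≠ u₂) :
    ∫⁻ z, ENNReal.ofReal (‖z - u₁‖ ^ (-2 * α) * ‖z - u₂‖ ^ (-2 * β))
      = ENNReal.ofReal (π ^ (finrank ℝ V / 2 : ℝ) * Gamma (α + β - finrank ℝ V / 2)
          * Gamma (finrank ℝ V / 2 - α) * Gamma (finrank ℝ V / 2 - β)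
          / (Gamma α * Gamma β * Gamma (finrank ℝ V - α - β))
          * ‖u₁ - u₂‖ ^ (finrank ℝ V - 2 * α - 2 * β)) := by
  have hV : (0 : ℝ) < finrank ℝ V := by linarith
  have : Nontrivial V := nontrivial_of_finrank_pos (R := ℝ) (by exact_mod_cast hV)
  set γ : ℝ := finrank ℝ V / 2 with hγ
  have hΓ : 0 < Gamma α * Gamma β := mul_pos (Gamma_pos_of_pos hα) (Gamma_pos_of_pos hβ)
  have hD : 0 < ‖u₁ - u₂‖ := norm_pos_iff.mpr (sub_ne_zero.mpr hu)
  have hae : ∀ᵐ z : V, z ≠ u₁ ∧ z ≠ u₂ := by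
    have h0 : (volume : Measure V) {u₁, u₂} = 0 := (Set.toFinite _).measure_zero volume
    filter_upwards [measure_eq_zero_iff_ae_notMem.mp h0] with z hz
    simpa [not_or] using hz
  refine (ENNReal.mul_right_strictMono (ENNReal.ofReal_pos.mpr hΓ).ne'
    ENNReal.ofReal_ne_top).injective ?_
  calc ENNReal.ofReal (Gamma α * Gamma β)
        * ∫⁻ z, ENNReal.ofReal (‖z - u₁‖ ^ (-2 * α) * ‖z - u₂‖ ^ (-2 * β))
      = ∫⁻ z, ∫⁻ t in Ioi 0, ∫⁻ s in Ioi 0, ENNReal.ofReal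
          (t ^ (α - 1) * s ^ (β - 1) * exp (-(t * ‖z - u₁‖ ^ 2 + s * ‖z - u₂‖ ^ 2))) := by
        rw [← lintegral_const_mul' _ _ ENNReal.ofReal_ne_top]
        refine lintegral_congr_ae ?_
        filter_upwards [hae] with z ⟨hz₁, hz₂⟩
        have h₁ : 0 < ‖z - u₁‖ := norm_pos_iff.mpr (sub_ne_zero.mpr hz₁)
        have h₂ : 0 < ‖z - u₂‖ := norm_pos_iff.mpr (sub_ne_zero.mpr hz₂)
        rw [lintegral_Ioi_lintegral_Ioi_rpow_mul_rpow_mul_exp_neg hα hβ (by positivity)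
          (by positivity), ← ENNReal.ofReal_mul hΓ.le, ← rpow_natCast_mul h₁.le,
          ← rpow_natCast_mul h₂.le]
        ring_nf
    _ = ∫⁻ t in Ioi 0, ∫⁻ s in Ioi 0, ∫⁻ z, ENNReal.ofReal
          (t ^ (α - 1) * s ^ (β - 1) * exp (-(t * ‖z - u₁‖ ^ 2 + s * ‖z - u₂‖ ^ 2))) :=
        lintegral_lintegral_lintegral_swap (by fun_prop)
    _ = ∫⁻ t in Ioi 0, ∫⁻ s in Ioi 0, ENNReal.ofReal (π ^ γ * (t ^ (α - 1) * s ^ (β - 1)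
          * (t + s) ^ (-γ) * exp (-(t * s / (t + s) * ‖u₁ - u₂‖ ^ 2)))) := by
        refine setLIntegral_congr_fun measurableSet_Ioi fun t (ht : 0 < t) => ?_
        refine setLIntegral_congr_fun measurableSet_Ioi fun s (hs : 0 < s) => ?_
        rw [lintegral_ofReal_const_mul (by positivity),
          lintegral_exp_neg_mul_norm_sub_sq_add_mul_norm_sub_sq ht hs, ← hγ,
          ← ENNReal.ofReal_mul (by positivity), div_rpow pi_nonneg (by positivity),
          rpow_neg (by positivity)]
        ring_nf
    _ = _ := by
        simp_rw [lintegral_ofReal_const_mul (rpow_nonneg pi_nonneg _)]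
        rw [lintegral_const_mul' _ _ ENNReal.ofReal_ne_top,
          lintegral_Ioi_lintegral_Ioi_rpow_mul_exp_parallel (by positivity) hαV hβV hαβ,
          ← ENNReal.ofReal_mul (by positivity), ← ENNReal.ofReal_mul hΓ.le]
        congr 1
        rw [show (finrank ℝ V : ℝ) = 2 * γ by rw [hγ]; ring, ← rpow_natCast, ← rpow_mul hD.le]
        field_simp
        ring_nf

theorem integral_norm_sub_rpow_mul_norm_sub_rpow {α β : ℝ} (hα : 0 < α) (hβ : 0 < β)
    (hαV : α < finrank ℝ V / 2) (hβV : β < finrank ℝ V / 2) (hαβ : finrank ℝ V / 2 < α + β)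
    {u₁ u₂ : V} (hu : u₁ ≠ u₂) :
    ∫ z, ‖z - u₁‖ ^ (-2 * α) * ‖z - u₂‖ ^ (-2 * β)
      = π ^ (finrank ℝ V / 2 : ℝ) * Gamma (α + β - finrank ℝ V / 2)
          * Gamma (finrank ℝ V / 2 - α) * Gamma (finrank ℝ V / 2 - β)
          / (Gamma α * Gamma β * Gamma (finrank ℝ V - α - β))
          * ‖u₁ - u₂‖ ^ (finrank ℝ V - 2 * α - 2 * β) := by
  rw [integral_eq_lintegral_of_nonneg_ae (ae_of_all _ fun _ => by positivity) (by fun_prop),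
    lintegral_norm_sub_rpow_mul_norm_sub_rpow hα hβ hαV hβV hαβ hu, ENNReal.toReal_ofReal]
  have := Gamma_pos_of_pos (s := finrank ℝ V - α - β) (by linarith)
  have := Gamma_pos_of_pos (s := α + β - finrank ℝ V / 2) (by linarith)
  have := Gamma_pos_of_pos (s := finrank ℝ V / 2 - α) (by linarith)
  have := Gamma_pos_of_pos (s := finrank ℝ V / 2 - β) (by linarith)
  have := Gamma_pos_of_pos hα
  have := Gamma_pos_of_pos hβ
  positivity

end InnerProductSpace

theorem dual_integral_n_one (θ : ℝ) (hθ : 0 < θ) (hθ' : θ < 1 / 2)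
    (u₁ u₂ : ℂ) (hu : u₁ ≠ u₂) :
    ∫ z : ℂ, ‖z - u₁‖ ^ (2 * θ - 2) * ‖z - u₂‖ ^ (2 * θ - 2) =
      π * (GammaCR θ ^ 2 / GammaCR (2 * θ)) *
        ‖u₁ - u₂‖ ^ (2 * (2 * θ - 1)) := by
  have h := integral_norm_sub_rpow_mul_norm_sub_rpow (V := ℂ) (α := 1 - θ) (β := 1 - θ)
    (by linarith) (by linarith) (by norm_num; linarith) (by norm_num; linarith)
    (by norm_num; linarith) hu
  rw [Complex.finrank_real_complex] at h
  have := Gamma_pos_of_pos (by linarith : 0 < 1 - θ)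
  have := Gamma_pos_of_pos (by linarith : 0 < 2 * θ)
  have := Gamma_pos_of_pos (by linarith : 0 < 1 - 2 * θ)
  rw [show 2 * θ - 2 = -2 * (1 - θ) by ring, h]
  norm_num [GammaCR]
  rw [show 1 - θ + (1 - θ) - 1 = 1 - 2 * θ by ring, show 2 - (1 - θ) - (1 - θ) = 2 * θ by ring,
    show 2 - 2 * (1 - θ) - 2 * (1 - θ) = 2 * (2 * θ - 1) by ring]
  field_simp
end

section
/- Injectivity of the Anderson map modulo permutations: if (u₁,…,uₙ) and (u₁',…,uₙ') in ℂⁿ give the same values of all x_α and y (with respect to fixed pairwise distinct z₁,…,z_{n-1} disjoint from both u-tuples), then (u₁',…,uₙ') is a permutation of (u₁,…,uₙ). -/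
/-!
The polynomials `∏ p, (X - u p)` and `∏ p, (X - u' p)` are monic of degree `m + 1`, and by `hy`
they have the same coefficient `-∑ p, u p` of `X ^ m`, so their difference has degree `< m`.
By `hx` they agree at the `m` distinct points `z α`, hence they are equal, and so are their
multisets of roots.
-/

open Finset Polynomial

theorem exists_perm_comp_eq_of_map_univ_val_eq {ι α : Type*} [Fintype ι] {u u' : ι → α}
    (h : univ.val.map u = univ.val.map u') : ∃ e : Equiv.Perm ι, u' = u ∘ e := by
  classical
  have hfiber : ∀ c, Fintype.card {p // u' p = c} = Fintype.card {p // u p = c} := by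
    intro c
    have := congrArg (Multiset.count c) h
    simp only [Multiset.count_map, eq_comm (a := c)] at this
    rw [Fintype.card_subtype, Fintype.card_subtype, card_def, card_def, filter_val, filter_val]
    exact this.symm
  exact ⟨Equiv.ofFiberEquiv fun c => Fintype.equivOfCardEq (hfiber c),
    funext fun p => (Equiv.ofFiberEquiv_map _ p).symm⟩

namespace Polynomial

variable {R : Type*} [CommRing R]

theorem Monic.degree_sub_lt_of_nextCoeff_eq {p q : R[X]} {n : ℕ} (hp : p.Monic) (hq : q.Monic)
    (hpn : p.natDegree = n + 1) (hqn : q.natDegree = n + 1) (hnext : p.nextCoeff = q.nextCoeff) :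
    (p - q).degree < n := by
  rw [degree_lt_iff_coeff_zero]
  intro k hk
  rw [coeff_sub, sub_eq_zero]
  obtain rfl | rfl | hk := (show k = n ∨ k = n + 1 ∨ n + 1 < k by omega)
  · simpa [nextCoeff_of_natDegree_pos, hpn, hqn] using hnext
  · rw [← hpn, hp.coeff_natDegree, hpn.trans hqn.symm, hq.coeff_natDegree]
  · rw [coeff_eq_zero_of_natDegree_lt (hpn ▸ hk), coeff_eq_zero_of_natDegree_lt (hqn ▸ hk)]

end Polynomial

theorem Multiset.eq_of_sum_eq_of_prod_map_sub_eq {R ι : Type*} [CommRing R] [IsDomain R]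
    {s t : Multiset R} (S : Finset ι) {z : ι → R} (hz : Set.InjOn z S)
    (hs : card s = #S + 1) (ht : card t = #S + 1) (hsum : s.sum = t.sum)
    (hprod : ∀ i ∈ S, (s.map (· - z i)).prod = (t.map (· - z i)).prod) : s = t := by
  suffices (s.map fun a => X - C a).prod = (t.map fun a => X - C a).prod by
    rw [← roots_multiset_prod_X_sub_C s, this, roots_multiset_prod_X_sub_C]
  have monic (r : Multiset R) : (r.map fun a => X - C a).prod.Monic :=
    monic_multiset_prod_of_monic _ _ fun a _ => monic_X_sub_C a
  refine eq_of_degree_sub_lt_of_eval_index_eq S hz ?_ fun i hi => ?_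
  · refine (monic s).degree_sub_lt_of_nextCoeff_eq (monic t) ?_ ?_ ?_
    · rw [natDegree_multiset_prod_X_sub_C_eq_card, hs]
    · rw [natDegree_multiset_prod_X_sub_C_eq_card, ht]
    · rw [multiset_prod_X_sub_C_nextCoeff, multiset_prod_X_sub_C_nextCoeff, hsum]
  · have hneg (r : Multiset R) :
        (r.map fun a => X - C a).prod.eval (z i) = (-1) ^ card r * (r.map (· - z i)).prod := by
      have := Multiset.prod_map_neg (r.map (· - z i))
      rw [Multiset.card_map, Multiset.map_map] at this
      rw [← this, eval_multiset_prod, Multiset.map_map]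
      exact congrArg _ (Multiset.map_congr rfl fun a _ => by simp)
    rw [hneg, hneg, hs, ht, hprod i hi]

theorem anderson_map_injective_mod_perm_general (m : ℕ) (z : Fin m → ℂ)
    (hz : Function.Injective z)
    (u u' : Fin (m + 1) → ℂ)
    (hx : ∀ α : Fin m,
      -(∏ p, (u p - z α)) / ∏ β ∈ Finset.univ.erase α, (z β - z α) =
        -(∏ p, (u' p - z α)) / ∏ β ∈ Finset.univ.erase α, (z β - z α))
    (hy : (∑ p, u p) - ∑ β, z β = (∑ p, u' p) - ∑ β, z β) :
    ∃ e : Equiv.Perm (Fin (m + 1)), u' = u ∘ e := by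
  have hden (α : Fin m) : ∏ β ∈ univ.erase α, (z β - z α) ≠ 0 :=
    prod_ne_zero_iff.2 fun β hβ => sub_ne_zero.2 (hz.ne (ne_of_mem_erase hβ))
  refine exists_perm_comp_eq_of_map_univ_val_eq
    (Multiset.eq_of_sum_eq_of_prod_map_sub_eq univ hz.injOn (by simp) (by simp)
      (sub_left_inj.1 hy) fun α _ => ?_)
  rw [Multiset.map_map, Multiset.map_map]
  exact neg_inj.1 ((div_left_inj' (hden α)).1 (hx α))

theorem anderson_map_injective_mod_perm (m : ℕ) (z : Fin m → ℂ)
    (hz : Function.Injective z)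
    (u u' : Fin (m + 1) → ℂ)
    (hzu : ∀ α p, z α ≠ u p) (hzu' : ∀ α p, z α ≠ u' p)
    (hx : ∀ α : Fin m,
      -(∏ p, (u p - z α)) / ∏ β ∈ Finset.univ.erase α, (z β - z α) =
        -(∏ p, (u' p - z α)) / ∏ β ∈ Finset.univ.erase α, (z β - z α))
    (hy : (∑ p, u p) - ∑ β, z β = (∑ p, u' p) - ∑ β, z β) :
    ∃ e : Equiv.Perm (Fin (m + 1)), u' = u ∘ e :=
  anderson_map_injective_mod_perm_general m z hz u u' hx hy
end
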